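/- Let m ≥ 2 be an integer and β_n := 2/(n(n+1)). The function θ ↦ (1/4)·m(m+1)(m−1)·cos(mθ) does not belong to the range of L[β_m]; that is, there exist no λ_1, λ_2 ∈ ℝ and real coefficients (a_n)_{n≥2} with ∑_{n≥2} n³|a_n| < ∞ such that (1/4)m(m+1)(m−1)cos(mθ) = (1/2)λ_1 + λ_2 cos θ + (1/4)∑_{n≥2} a_n n(n+1)(n−1)(β_m − β_n) cos(nθ) for all θ. Since this function equals ∂_β L[β](0,0,w^{m+1})|_{β=β_m}, the transversality condition of the Crandall–Rabinowitz theorem holds at β = β_m. -/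

import Mathlib

/-!
Project the identity onto `cos (m θ)`: multiply by `cos (m θ)` and integrate over `[0, 2π]`.
The bound `n ^ 3 |a n|` makes the cosine series absolutely summable, so it can be integrated
term by term, and by orthogonality only its `m`-th coefficient survives; that coefficient carries
the factor `β_m - β_m = 0`. The constant and `cos θ` are orthogonal to `cos (m θ)` as `m ≥ 2`.
Hence the right-hand side projects to `0`, while the left-hand side projects to
`(1/4) m (m+1) (m-1) π > 0`.
-/

open Real intervalIntegral

theorem integral_cos_int_mul (n : ℤ) :
    ∫ x in (0 : ℝ)..2 * π, cos (n * x) = if n = 0 then 2 * π else 0 := by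
  split_ifs with hn
  · simp [hn]
  · have hn' : (n : ℝ) ≠ 0 := Int.cast_ne_zero.mpr hn
    have hsin : sin (n * (2 * π)) = 0 := by
      simpa [mul_assoc, mul_left_comm] using sin_int_mul_pi (2 * n)
    simp [integral_comp_mul_left cos hn', hsin]

theorem integral_cos_nat_mul_mul_cos_nat_mul (j : ℕ) {k : ℕ} (hk : k ≠ 0) :
    ∫ x in (0 : ℝ)..2 * π, cos (j * x) * cos (k * x) = if j = k then π else 0 := by
  have hprod (x : ℝ) : cos (j * x) * cos (k * x)
      = (cos (((j + k : ℤ) : ℝ) * x) + cos (((j - k : ℤ) : ℝ) * x)) / 2 := by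
    push_cast
    rw [add_mul, sub_mul, cos_add, cos_sub]
    ring
  have hint (n : ℤ) :
      IntervalIntegrable (fun x : ℝ => cos (n * x)) MeasureTheory.volume 0 (2 * π) :=
    (continuous_cos.comp (continuous_const.mul continuous_id)).intervalIntegrable _ _
  have hadd : (j : ℤ) + k ≠ 0 := by omega
  have hsub : (j : ℤ) - k = 0 ↔ j = k := by omega
  simp only [hprod, integral_div, integral_add (hint _) (hint _), integral_cos_int_mul, hadd,
    hsub, if_false]
  split_ifs <;> ring

theorem integral_mul_cos_nat_mul_mul_cos_nat_mul_self (A : ℝ) {k : ℕ} (hk : k ≠ 0) :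
    ∫ x in (0 : ℝ)..2 * π, A * cos (k * x) * cos (k * x) = A * π := by
  simp_rw [mul_assoc A, integral_const_mul, integral_cos_nat_mul_mul_cos_nat_mul k hk, if_true]

theorem abs_mul_cos_le (a x : ℝ) : |a * cos x| ≤ |a| := by
  simpa [abs_mul] using mul_le_of_le_one_right (abs_nonneg a) (abs_cos_le_one x)

section CosineSeries

variable {c : ℕ → ℝ}

theorem continuous_tsum_mul_cos_nat_mul (hc : Summable fun n => |c n|) :
    Continuous fun x : ℝ => ∑' n : ℕ, c n * cos (n * x) :=
  continuous_tsum (fun _ => by fun_prop) hc fun n x => abs_mul_cos_le (c n) (n * x)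

theorem integral_tsum_mul_cos_nat_mul_mul_cos_nat_mul (hc : Summable fun n => |c n|)
    {k : ℕ} (hk : k ≠ 0) :
    ∫ x in (0 : ℝ)..2 * π, (∑' n : ℕ, c n * cos (n * x)) * cos (k * x) = c k * π := by
  have hterm (n : ℕ) : ∫ x in (0 : ℝ)..2 * π, c n * cos (n * x) * cos (k * x)
      = if n = k then c k * π else 0 := by
    simp_rw [mul_assoc, integral_const_mul, integral_cos_nat_mul_mul_cos_nat_mul n hk]
    split_ifs with h <;> simp [h]
  have hbound (n : ℕ) (x : ℝ) : ‖c n * cos (n * x) * cos (k * x)‖ ≤ |c n| :=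
    (norm_eq_abs _).trans_le ((abs_mul_cos_le _ _).trans (abs_mul_cos_le _ _))
  have hsum : HasSum (fun n => ∫ x in (0 : ℝ)..2 * π, c n * cos (n * x) * cos (k * x))
      (∫ x in (0 : ℝ)..2 * π, (∑' n : ℕ, c n * cos (n * x)) * cos (k * x)) :=
by
    refine hasSum_integral_of_dominated_convergence (fun n _ => |c n|)
      (fun n => Continuous.aestronglyMeasurable (by fun_prop))
      (fun n => .of_forall fun x _ => hbound n x) (.of_forall fun _ _ => hc)
      intervalIntegrable_const (.of_forall fun x _ => ?_)
    refine (Summable.hasSum ?_).mul_right _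
    exact .of_norm_bounded hc fun n => (norm_eq_abs _).trans_le (abs_mul_cos_le (c n) (n * x))
  simp_rw [hterm] at hsum
  exact hsum.unique (hasSum_ite_eq k _)

theorem integral_const_add_mul_cos_add_mul_tsum_mul_cos_nat_mul (A B D : ℝ)
    (hc : Summable fun n => |c n|) {k : ℕ} (hk : 2 ≤ k) :
    ∫ x in (0 : ℝ)..2 * π, (A + B * cos x + D * ∑' n : ℕ, c n * cos (n * x)) * cos (k * x)
      = D * (c k * π) := by
  have hk0 : k ≠ 0 := by omega
  have h0 : ∫ x in (0 : ℝ)..2 * π, cos (k * x) = 0 := by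
    simpa [if_neg hk0.symm] using integral_cos_nat_mul_mul_cos_nat_mul 0 hk0
  have h1 : ∫ x in (0 : ℝ)..2 * π, cos x * cos (k * x) = 0 := by
    simpa [if_neg (show 1 ≠ k by omega)] using integral_cos_nat_mul_mul_cos_nat_mul 1 hk0
  have hsplit (x : ℝ) : (A + B * cos x + D * ∑' n : ℕ, c n * cos (n * x)) * cos (k * x)
      = A * cos (k * x) + B * (cos x * cos (k * x))
        + D * ((∑' n : ℕ, c n * cos (n * x)) * cos (k * x)) := by ring
  have := continuous_tsum_mul_cos_nat_mul hc
  simp_rw [hsplit]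
  rw [integral_add, integral_add, integral_const_mul, integral_const_mul, integral_const_mul,
    h0, h1, integral_tsum_mul_cos_nat_mul_mul_cos_nat_mul hc hk0]
  · ring
  all_goals exact Continuous.intervalIntegrable (by fun_prop) _ _

end CosineSeries

theorem two_div_nat_mul_succ_mem_Icc (n : ℕ) : 2 / ((n : ℝ) * (n + 1)) ∈ Set.Icc (0 : ℝ) 1 := by
  refine ⟨by positivity, ?_⟩
  rcases Nat.eq_zero_or_pos n with rfl | hn
  · simp
  · have hn : (1 : ℝ) ≤ n := by exact_mod_cast hn
    rw [div_le_one (by positivity)]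
    nlinarith

theorem abs_mul_sub_two_div_le (m n : ℕ) :
    |(n : ℝ) * (n + 1) * (n - 1) * (2 / ((m : ℝ) * (m + 1)) - 2 / ((n : ℝ) * (n + 1)))|
      ≤ (n : ℝ) ^ 3 := by
  obtain ⟨hm0, hm1⟩ := two_div_nat_mul_succ_mem_Icc m
  obtain ⟨hn0, hn1⟩ := two_div_nat_mul_succ_mem_Icc n
  have hpoly : |(n : ℝ) * (n + 1) * (n - 1)| ≤ n ^ 3 := by
    rcases Nat.eq_zero_or_pos n with rfl | hn
    · simp
    · have hn : (1 : ℝ) ≤ n := by exact_mod_cast hn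
      rw [abs_of_nonneg (mul_nonneg (by positivity) (by linarith))]
      nlinarith
  calc _ = |(n : ℝ) * (n + 1) * (n - 1)|
          * |2 / ((m : ℝ) * (m + 1)) - 2 / ((n : ℝ) * (n + 1))| := abs_mul _ _
    _ ≤ (n : ℝ) ^ 3 * 1 :=
        mul_le_mul hpoly (abs_sub_le_of_nonneg_of_le hm0 hm1 hn0 hn1) (abs_nonneg _)
          (by positivity)
    _ = (n : ℝ) ^ 3 := mul_one _

theorem summable_abs_mul_sub_two_div (m : ℕ) {a : ℕ → ℝ}
    (ha : Summable fun n : ℕ => (n : ℝ) ^ 3 * |a n|) :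
    Summable fun n : ℕ => |a n * (n : ℝ) * ((n : ℝ) + 1) * ((n : ℝ) - 1)
      * (2 / ((m : ℝ) * ((m : ℝ) + 1)) - 2 / ((n : ℝ) * ((n : ℝ) + 1)))| := by
  refine ha.of_nonneg_of_le (fun _ => abs_nonneg _) fun n => ?_
  simpa only [mul_assoc, abs_mul, mul_comm |a n|] using
    mul_le_mul_of_nonneg_left (abs_mul_sub_two_div_le m n) (abs_nonneg (a n))

/-- Transversality: the function `θ ↦ (1/4) m(m+1)(m-1) cos(mθ)`, which equals
`∂_β L[β](0,0,w^{m+1})|_{β=β_m}`, does not belong to the range of the linearized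
operator `L[β_m]` (in Fourier form, with `β_n = 2/(n(n+1))`). -/
theorem transversality_condition (m : ℕ) (hm : 2 ≤ m) :
    ¬ ∃ (lam1 lam2 : ℝ) (a : ℕ → ℝ), a 0 = 0 ∧ a 1 = 0 ∧
        Summable (fun n : ℕ => (n : ℝ) ^ 3 * |a n|) ∧
        ∀ θ : ℝ,
          1 / 4 * (m : ℝ) * ((m : ℝ) + 1) * ((m : ℝ) - 1) * Real.cos ((m : ℝ) * θ)
            = 1 / 2 * lam1 + lam2 * Real.cos θ
              + 1 / 4 * (∑' n : ℕ,
                  a n * (n : ℝ) * ((n : ℝ) + 1) * ((n : ℝ) - 1)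
                    * (2 / ((m : ℝ) * ((m : ℝ) + 1)) - 2 / ((n : ℝ) * ((n : ℝ) + 1)))
                    * Real.cos ((n : ℝ) * θ)) := by
  rintro ⟨lam1, lam2, a, -, -, ha, h⟩
  set c : ℕ → ℝ := fun n => a n * (n : ℝ) * ((n : ℝ) + 1) * ((n : ℝ) - 1)
    * (2 / ((m : ℝ) * ((m : ℝ) + 1)) - 2 / ((n : ℝ) * ((n : ℝ) + 1)))
  have hc : Summable fun n => |c n| := summable_abs_mul_sub_two_div m ha
  have hcm : c m = 0 := by simp [c]
  have hproj : ∫ θ in (0 : ℝ)..2 * π,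
      1 / 4 * (m : ℝ) * ((m : ℝ) + 1) * ((m : ℝ) - 1) * cos (m * θ) * cos (m * θ)
        = ∫ θ in (0 : ℝ)..2 * π,
          (1 / 2 * lam1 + lam2 * cos θ + 1 / 4 * ∑' n, c n * cos (n * θ)) * cos (m * θ) :=
    integral_congr fun θ _ => congrArg (· * cos (m * θ)) (h θ)
  rw [integral_mul_cos_nat_mul_mul_cos_nat_mul_self _ (by omega),
    integral_const_add_mul_cos_add_mul_tsum_mul_cos_nat_mul _ _ _ hc hm, hcm] at hproj
  have hm1 : (1 : ℝ) < m := by exact_mod_cast hm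
  have : 0 < 1 / 4 * (m : ℝ) * ((m : ℝ) + 1) * ((m : ℝ) - 1) * π := by
    have : (0 : ℝ) < (m : ℝ) - 1 := by linarith
    positivity
  linarith
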